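/- Let B be a tensored and cotensored V-category. Then the V-strong-monomorphisms of B coincide with the ordinary strong monomorphisms of the underlying ordinary category (StrMono_V B = StrMono B), and the V-epimorphisms coincide with the ordinary epimorphisms (Epi_V B = Epi B). -/

import Mathlib

open CategoryTheory CategoryTheory.Limits CategoryTheory.MonoidalCategory

universe w v₁ v₂ v₃ v₄ u₁ u₂ u₃ u₄

namespace EnrichedFS

variable (V : Type u₁) [Category.{v₁} V] [MonoidalCategory V] [SymmetricCategory V]
  [MonoidalClosed V]
variable (B : Type u₂) [Category.{v₂} B] [EnrichedOrdinaryCategory V B]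

/-- `e` is `V`-orthogonal to `m`: the square of hom-objects
with top `B(A₂,m)`, left `B(e,X₁)`, right `B(e,X₂)`, bottom `B(A₁,m)`
is a pullback in `V`. -/
def VOrth {A₁ A₂ X₁ X₂ : B} (e : A₁ ⟶ A₂) (m : X₁ ⟶ X₂) : Prop :=
  IsPullback (eHomWhiskerLeft V A₂ m) (eHomWhiskerRight V e X₁)
    (eHomWhiskerRight V e X₂) (eHomWhiskerLeft V A₁ m)

/-- `H^{↓V}`: the class of morphisms to which every member of `H` is `V`-orthogonal. -/
def vRlp (H : MorphismProperty B) : MorphismProperty B :=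
  fun _ _ m => ∀ ⦃A₁ A₂ : B⦄ (e : A₁ ⟶ A₂), H e → VOrth V B e m

/-- `M^{↑V}`: the class of morphisms which are `V`-orthogonal to every member of `M`. -/
def vLlp (M : MorphismProperty B) : MorphismProperty B :=
  fun _ _ e => ∀ ⦃X₁ X₂ : B⦄ (m : X₁ ⟶ X₂), M m → VOrth V B e m

/-- ordinary orthogonality: unique diagonal fillers for every commutative square. -/
def OrdOrth {A₁ A₂ X₁ X₂ : B} (e : A₁ ⟶ A₂) (m : X₁ ⟶ X₂) : Prop :=
  ∀ (u : A₁ ⟶ X₁) (v : A₂ ⟶ X₂), u ≫ m = e ≫ v →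
    ∃! d : A₂ ⟶ X₁, e ≫ d = u ∧ d ≫ m = v

/-- `H^{↓}` (ordinary). -/
def ordRlp (H : MorphismProperty B) : MorphismProperty B :=
  fun _ _ m => ∀ ⦃A₁ A₂ : B⦄ (e : A₁ ⟶ A₂), H e → OrdOrth B e m

/-- `M^{↑}` (ordinary). -/
def ordLlp (M : MorphismProperty B) : MorphismProperty B :=
  fun _ _ e => ∀ ⦃X₁ X₂ : B⦄ (m : X₁ ⟶ X₂), M m → OrdOrth B e m

/-- `(E,M)` is a `V`-prefactorization system: `E^{↓V} = M` and `M^{↑V} = E`. -/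
def IsVPrefactorization (E M : MorphismProperty B) : Prop :=
  vRlp V B E = M ∧ vLlp V B M = E

/-- `(E,M)` is an ordinary prefactorization system. -/
def IsOrdPrefactorization (E M : MorphismProperty B) : Prop :=
  ordRlp B E = M ∧ ordLlp B M = E

/-- every morphism factors as a morphism in `E` followed by a morphism in `M`. -/
def FactorizationsExist (E M : MorphismProperty B) : Prop :=
  ∀ ⦃X Y : B⦄ (f : X ⟶ Y), ∃ (Z : B) (e : X ⟶ Z) (m : Z ⟶ Y), E e ∧ M m ∧ e ≫ m = f

/-- `(E,M)` is a `V`-factorization system. -/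
def IsVFactorizationSystem (E M : MorphismProperty B) : Prop :=
  IsVPrefactorization V B E M ∧ FactorizationsExist B E M

/-- `(E,M)` is an ordinary factorization system. -/
def IsOrdFactorizationSystem (E M : MorphismProperty B) : Prop :=
  IsOrdPrefactorization B E M ∧ FactorizationsExist B E M

/-- intersection of two classes of morphisms. -/
def interProp (M N : MorphismProperty B) : MorphismProperty B := fun _ _ f => M f ∧ N f

/-- `V`-monomorphisms. -/
def vMono : MorphismProperty B := fun _ _ m => ∀ A : B, Mono (eHomWhiskerLeft V A m)

/-- `V`-epimorphisms. -/
def vEpi : MorphismProperty B := fun _ _ e => ∀ A : B, Mono (eHomWhiskerRight V e A)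

/-- `V`-strong monomorphisms. -/
def vStrongMono : MorphismProperty B := fun _ _ m =>
  vMono V B m ∧ ∀ ⦃A₁ A₂ : B⦄ (e : A₁ ⟶ A₂), vEpi V B e → VOrth V B e m

/-- `V`-strong epimorphisms. -/
def vStrongEpi : MorphismProperty B := fun _ _ e =>
  vEpi V B e ∧ ∀ ⦃X₁ X₂ : B⦄ (m : X₁ ⟶ X₂), vMono V B m → VOrth V B e m

/-- ordinary monomorphisms, as a class. -/
def ordMono : MorphismProperty B := fun _ _ m => Mono m

/-- ordinary epimorphisms, as a class. -/
def ordEpi : MorphismProperty B := fun _ _ e => Epi e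

/-- ordinary strong monomorphisms. -/
def ordStrongMono : MorphismProperty B := fun _ _ m =>
  Mono m ∧ ∀ ⦃A₁ A₂ : B⦄ (e : A₁ ⟶ A₂), Epi e → OrdOrth B e m

/-- ordinary strong epimorphisms. -/
def ordStrongEpi : MorphismProperty B := fun _ _ e =>
  Epi e ∧ ∀ ⦃X₁ X₂ : B⦄ (m : X₁ ⟶ X₂), Mono m → OrdOrth B e m

/-- closure under composition with isomorphisms on either side. -/
def ClosedUnderIsoComp (E : MorphismProperty B) : Prop :=
  (∀ ⦃X Y Z : B⦄ (e : X ⟶ Y) (i : Y ⟶ Z), E e → IsIso i → E (e ≫ i)) ∧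
  (∀ ⦃X Y Z : B⦄ (i : X ⟶ Y) (e : Y ⟶ Z), IsIso i → E e → E (i ≫ e))

/-- a commutative square which is a `V`-pullback: it is sent to a pullback square
in `V` by every hom functor `B(A,-)`. -/
def IsVPullbackSq {P X Y Z : B} (p₁ : P ⟶ X) (p₂ : P ⟶ Y) (f : X ⟶ Z) (g : Y ⟶ Z) : Prop :=
  p₁ ≫ f = p₂ ≫ g ∧
    ∀ A : B, IsPullback (eHomWhiskerLeft V A p₁) (eHomWhiskerLeft V A p₂)
      (eHomWhiskerLeft V A f) (eHomWhiskerLeft V A g)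

/-- a commutative square which is a `V`-pushout: it is sent to a pullback square
in `V` by every hom functor `B(-,A)`. -/
def IsVPushoutSq {X Y₁ Y₂ Q : B} (f₁ : X ⟶ Y₁) (f₂ : X ⟶ Y₂) (i₁ : Y₁ ⟶ Q) (i₂ : Y₂ ⟶ Q) :
    Prop :=
  f₁ ≫ i₁ = f₂ ≫ i₂ ∧
    ∀ A : B, IsPullback (eHomWhiskerRight V i₁ A) (eHomWhiskerRight V i₂ A)
      (eHomWhiskerRight V f₁ A) (eHomWhiskerRight V f₂ A)

/-- `B` has `V`-kernel pairs. -/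
def HasVKernelPairs : Prop :=
  ∀ ⦃X Y : B⦄ (f : X ⟶ Y), ∃ (P : B) (p₁ p₂ : P ⟶ X), IsVPullbackSq V B p₁ p₂ f f

/-- `B` has `V`-cokernel pairs. -/
def HasVCokernelPairs : Prop :=
  ∀ ⦃X Y : B⦄ (f : X ⟶ Y), ∃ (Q : B) (i₁ i₂ : Y ⟶ Q), IsVPushoutSq V B f f i₁ i₂

/-- `m : P ⟶ C` is a `V`-fibre-product (`V`-wide-pullback) of the family `f i : X i ⟶ C`,
with projections `π i`. -/
def IsVFibreProduct {ι : Type w} {C : B} {X : ι → B} (f : ∀ i, X i ⟶ C)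
    {P : B} (m : P ⟶ C) (π : ∀ i, P ⟶ X i) : Prop :=
  (∀ i, π i ≫ f i = m) ∧
    ∀ (A : B) (Z : V) (z : Z ⟶ (A ⟶[V] C)) (zi : ∀ i, Z ⟶ (A ⟶[V] X i)),
      (∀ i, zi i ≫ eHomWhiskerLeft V A (f i) = z) →
        ∃! t : Z ⟶ (A ⟶[V] P), t ≫ eHomWhiskerLeft V A m = z ∧
          ∀ i, t ≫ eHomWhiskerLeft V A (π i) = zi i

/-- `m : P ⟶ C` is an ordinary fibre product (wide pullback) of the family `f i : X i ⟶ C`. -/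
def OrdIsFibreProduct {ι : Type w} {C : B} {X : ι → B} (f : ∀ i, X i ⟶ C)
    {P : B} (m : P ⟶ C) (π : ∀ i, P ⟶ X i) : Prop :=
  (∀ i, π i ≫ f i = m) ∧
    ∀ ⦃W' : B⦄ (z : W' ⟶ C) (zi : ∀ i, W' ⟶ X i), (∀ i, zi i ≫ f i = z) →
      ∃! t : W' ⟶ P, t ≫ m = z ∧ ∀ i, t ≫ π i = zi i

/-- a cone is a `V`-limit cone: it is sent to a limit cone in `V` by every `B(A,-)`. -/
def IsVLimitCone {J : Type u₃} [Category.{v₃} J] {D : J ⥤ B} (c : Cone D) : Prop :=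
  ∀ (A : B) (Z : V) (z : ∀ j : J, Z ⟶ (A ⟶[V] D.obj j)),
    (∀ ⦃j j' : J⦄ (φ : j ⟶ j'), z j ≫ eHomWhiskerLeft V A (D.map φ) = z j') →
      ∃! t : Z ⟶ (A ⟶[V] c.pt), ∀ j, t ≫ eHomWhiskerLeft V A (c.π.app j) = z j

/-- a cocone is a `V`-colimit cocone: it is sent to a limit cone in `V` by every `B(-,A)`. -/
def IsVColimitCocone {J : Type u₃} [Category.{v₃} J] {D : J ⥤ B} (c : Cocone D) : Prop :=
  ∀ (A : B) (Z : V) (z : ∀ j : J, Z ⟶ (D.obj j ⟶[V] A)),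
    (∀ ⦃j j' : J⦄ (φ : j ⟶ j'), z j' ≫ eHomWhiskerRight V (D.map φ) A = z j) →
      ∃! t : Z ⟶ (c.pt ⟶[V] A), ∀ j, t ≫ eHomWhiskerRight V (c.ι.app j) A = z j

/-- `B` has small `V`-limits. -/
def HasSmallVLimits : Prop :=
  ∀ (J : Type v₂) [SmallCategory J] (D : J ⥤ B), ∃ c : Cone D, IsVLimitCone V B c

/-- `B` has small `V`-colimits. -/
def HasSmallVColimits : Prop :=
  ∀ (J : Type v₂) [SmallCategory J] (D : J ⥤ B), ∃ c : Cocone D, IsVColimitCocone V B c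

/-- `B` has finite `V`-limits. -/
def HasFiniteVLimits : Prop :=
  ∀ (J : Type) [SmallCategory J] [FinCategory J] (D : J ⥤ B),
    ∃ c : Cone D, IsVLimitCone V B c

/-- `B` is well-powered with respect to the class `M`: every object has,
up to isomorphism, only a set of `M`-subobjects. -/
def WellPoweredWrt (M : MorphismProperty B) : Prop :=
  ∀ X : B, ∃ (ι : Type v₂) (Y : ι → B) (f : ∀ i, Y i ⟶ X), (∀ i, M (f i)) ∧
    ∀ ⦃Z : B⦄ (g : Z ⟶ X), M g → ∃ (i : ι) (h : Z ≅ Y i), h.hom ≫ f i = g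

/-- `B` is co-well-powered with respect to the class `E`. -/
def CoWellPoweredWrt (E : MorphismProperty B) : Prop :=
  ∀ X : B, ∃ (ι : Type v₂) (Y : ι → B) (f : ∀ i, X ⟶ Y i), (∀ i, E (f i)) ∧
    ∀ ⦃Z : B⦄ (g : X ⟶ Z), E g → ∃ (i : ι) (h : Y i ≅ Z), f i ≫ h.hom = g

/-- comparison morphism `B(T, X) ⟶ [v, B(A, X)]` in `V` induced by a
unit `η : v ⟶ B(A, T)`, where `T` is a candidate tensor `v ⊗ A`. -/
def tensorComparison {v : V} {A T : B} (η : v ⟶ (A ⟶[V] T)) (X : B) :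
    (T ⟶[V] X) ⟶ (ihom v).obj (A ⟶[V] X) :=
  MonoidalClosed.curry (eComp V A T X) ≫ (MonoidalClosed.pre η).app (A ⟶[V] X)

/-- `η : v ⟶ B(A,T)` exhibits `T` as a tensor `v ⊗ A` in the enriched sense. -/
def IsTensorUnit (v : V) (A T : B) (η : v ⟶ (A ⟶[V] T)) : Prop :=
  ∀ X : B, IsIso (tensorComparison V B η X)

/-- `B` is tensored over `V`. -/
def Tensored : Prop :=
  ∀ (v : V) (A : B), ∃ (T : B) (η : v ⟶ (A ⟶[V] T)), IsTensorUnit V B v A T η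

/-- `E` is closed under tensors: whenever tensors exist, `v ⊗ e` lies in `E` for `e ∈ E`. -/
def ClosedUnderTensors (E : MorphismProperty B) : Prop :=
  ∀ (v : V) ⦃A₁ A₂ : B⦄ (e : A₁ ⟶ A₂) {T₁ T₂ : B}
    (η₁ : v ⟶ (A₁ ⟶[V] T₁)) (η₂ : v ⟶ (A₂ ⟶[V] T₂)),
    IsTensorUnit V B v A₁ T₁ η₁ → IsTensorUnit V B v A₂ T₂ η₂ → E e →
      ∀ t : T₁ ⟶ T₂, η₁ ≫ eHomWhiskerLeft V A₁ t = η₂ ≫ eHomWhiskerRight V e T₂ → E t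

/-- comparison morphism `B(A, C) ⟶ [v, B(A, X)]` in `V` induced by a
counit `ε : v ⟶ B(C, X)`, where `C` is a candidate cotensor `[v, X]`. -/
def cotensorComparison {v : V} {C X : B} (ε : v ⟶ (C ⟶[V] X)) (A : B) :
    (A ⟶[V] C) ⟶ (ihom v).obj (A ⟶[V] X) :=
  MonoidalClosed.curry ((β_ (C ⟶[V] X) (A ⟶[V] C)).hom ≫ eComp V A C X) ≫
    (MonoidalClosed.pre ε).app (A ⟶[V] X)

/-- `ε : v ⟶ B(C,X)` exhibits `C` as a cotensor `[v, X]` in the enriched sense. -/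
def IsCotensorCounit (v : V) (X C : B) (ε : v ⟶ (C ⟶[V] X)) : Prop :=
  ∀ A : B, IsIso (cotensorComparison V B ε A)

/-- `B` is cotensored over `V`. -/
def Cotensored : Prop :=
  ∀ (v : V) (X : B), ∃ (C : B) (ε : v ⟶ (C ⟶[V] X)), IsCotensorCounit V B v X C ε

/-- `M` is closed under cotensors: `[v, m]` lies in `M` for `m ∈ M`. -/
def ClosedUnderCotensors (M : MorphismProperty B) : Prop :=
  ∀ (v : V) ⦃X₁ X₂ : B⦄ (m : X₁ ⟶ X₂) {C₁ C₂ : B}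
    (ε₁ : v ⟶ (C₁ ⟶[V] X₁)) (ε₂ : v ⟶ (C₂ ⟶[V] X₂)),
    IsCotensorCounit V B v X₁ C₁ ε₁ → IsCotensorCounit V B v X₂ C₂ ε₂ → M m →
      ∀ t : C₁ ⟶ C₂, ε₁ ≫ eHomWhiskerLeft V C₁ m = ε₂ ≫ eHomWhiskerRight V t X₂ → M t

/-- a `V`-functor from a `V`-category `J` to an enriched ordinary category `D`. -/
structure VFunctor (J : Type u₃) [EnrichedCategory V J]
    (D : Type u₄) [Category.{v₄} D] [EnrichedOrdinaryCategory V D] where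
  obj : J → D
  emap : ∀ X Y : J, (X ⟶[V] Y) ⟶ (obj X ⟶[V] obj Y)
  emap_id : ∀ X : J, eId V X ≫ emap X X = eId V (obj X)
  emap_comp : ∀ X Y Z : J,
    eComp V X Y Z ≫ emap X Z = (emap X Y ⊗ₘ emap Y Z) ≫ eComp V (obj X) (obj Y) (obj Z)

/-- the underlying action of a `V`-functor on ordinary morphisms. -/
def VFunctor.map' {J : Type u₃} [Category.{v₃} J] [EnrichedOrdinaryCategory V J]
    {D : Type u₄} [Category.{v₄} D] [EnrichedOrdinaryCategory V D]
    (F : VFunctor V J D) {X Y : J} (f : X ⟶ Y) : F.obj X ⟶ F.obj Y :=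
  (eHomEquiv V).symm (eHomEquiv V f ≫ F.emap X Y)

/-- a `V`-adjunction `F ⊣ G`, given by a `V`-natural isomorphism
`D(F A, X) ≅ A(A, G X)` of hom-objects. -/
structure VAdjunction {A : Type u₃} [Category.{v₃} A] [EnrichedOrdinaryCategory V A]
    {D : Type u₄} [Category.{v₄} D] [EnrichedOrdinaryCategory V D]
    (F : VFunctor V A D) (G : VFunctor V D A) where
  iso : ∀ (X : A) (Y : D), (F.obj X ⟶[V] Y) ≅ (X ⟶[V] G.obj Y)
  nat_right : ∀ (X : A) (Y Y' : D),
    eComp V (F.obj X) Y Y' ≫ (iso X Y').hom =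
      ((iso X Y).hom ⊗ₘ G.emap Y Y') ≫ eComp V X (G.obj Y) (G.obj Y')
  nat_left : ∀ (X X' : A) (Y : D),
    (F.emap X X' ▷ (F.obj X' ⟶[V] Y)) ≫ eComp V (F.obj X) (F.obj X') Y ≫ (iso X Y).hom =
      ((X ⟶[V] X') ◁ (iso X' Y).hom) ≫ eComp V X X' (G.obj Y)

/-- a `V`-functor `J → V` (a weight), presented by its uncurried action. -/
structure VWeight (J : Type u₃) [EnrichedCategory V J] where
  obj : J → V
  act : ∀ j j' : J, obj j ⊗ (j ⟶[V] j') ⟶ obj j'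
  act_id : ∀ j : J, (obj j ◁ eId V j) ≫ act j j = (ρ_ (obj j)).hom
  act_comp : ∀ j j' j'' : J,
    (α_ (obj j) (j ⟶[V] j') (j' ⟶[V] j'')).inv ≫ (act j j' ▷ (j' ⟶[V] j'')) ≫ act j' j'' =
      (obj j ◁ eComp V j j' j'') ≫ act j j''

/-- a `V`-natural transformation between `V`-functors. -/
structure VNatTrans {J : Type u₃} [EnrichedCategory V J]
    {D : Type u₄} [Category.{v₄} D] [EnrichedOrdinaryCategory V D]
    (F G : VFunctor V J D) where
  app : ∀ j : J, F.obj j ⟶ G.obj j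
  naturality : ∀ j j' : J,
    F.emap j j' ≫ eHomWhiskerLeft V (F.obj j) (app j') =
      G.emap j j' ≫ eHomWhiskerRight V (app j) (G.obj j')

/-- `cone` exhibits `L` as the `V`-enriched weighted (indexed) limit `[W, F]`. -/
structure IsWeightedLimit {J : Type u₃} [EnrichedCategory V J]
    {D : Type u₄} [Category.{v₄} D] [EnrichedOrdinaryCategory V D]
    (W : VWeight V J) (F : VFunctor V J D) (L : D)
    (cone : ∀ j : J, W.obj j ⟶ (L ⟶[V] F.obj j)) : Prop where
  natural : ∀ j j' : J,
    W.act j j' ≫ cone j' =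
      (cone j ▷ (j ⟶[V] j')) ≫ ((L ⟶[V] F.obj j) ◁ F.emap j j') ≫
        eComp V L (F.obj j) (F.obj j')
  universal : ∀ (A : D) (Z : V) (μ : ∀ j : J, Z ⊗ W.obj j ⟶ (A ⟶[V] F.obj j)),
    (∀ j j' : J,
      (Z ◁ W.act j j') ≫ μ j' =
        (α_ Z (W.obj j) (j ⟶[V] j')).inv ≫ (μ j ▷ (j ⟶[V] j')) ≫
          ((A ⟶[V] F.obj j) ◁ F.emap j j') ≫ eComp V A (F.obj j) (F.obj j')) →
      ∃! t : Z ⟶ (A ⟶[V] L), ∀ j : J,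
        (t ▷ W.obj j) ≫ ((A ⟶[V] L) ◁ cone j) ≫ eComp V A L (F.obj j) = μ j

/-- `B` is `V`-finitely-well-complete: it has finite `V`-limits and `V`-intersections
of arbitrary class-indexed families of `V`-strong monomorphisms. -/
def VFinitelyWellComplete : Prop :=
  HasFiniteVLimits V B ∧
    ∀ {ι : Type (max u₂ v₂)} {C : B} (X : ι → B) (f : ∀ i, X i ⟶ C),
      (∀ i, vStrongMono V B (f i)) →
        ∃ (P : B) (m : P ⟶ C) (π : ∀ i, P ⟶ X i), IsVFibreProduct V B f m π

/-- `B` is finitely well-complete (ordinary sense): it has finite limits and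
intersections of arbitrary class-indexed families of strong monomorphisms. -/
def OrdFinitelyWellComplete : Prop :=
  HasFiniteLimits B ∧
    ∀ {ι : Type (max u₂ v₂)} {C : B} (X : ι → B) (f : ∀ i, X i ⟶ C),
      (∀ i, ordStrongMono B (f i)) →
        ∃ (P : B) (m : P ⟶ C) (π : ∀ i, P ⟶ X i), OrdIsFibreProduct B f m π

/-!
Tensors and cotensors turn maps `v ⟶ B(A, X)` in `V` into morphisms `v ⊗ A ⟶ X`, resp.
`A ⟶ [v, X]`, of `B`, naturally in `X`, resp. `A`. Hence `B(A, m)` is mono as soon as `m` is, and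
`B(e, X)` as soon as `e` is epi; taking `v = 𝟙_ V` gives the converses. Likewise a cone with
vertex `v` over the square expressing `e ↓_V m` is a commutative square from `v ⊗ e` to `m`, and
`v ⊗ e` is epi when `e` is a `V`-epimorphism, so ordinary strong monomorphisms are
`V`-orthogonal to `V`-epimorphisms; on global elements `e ↓_V m` gives `e ↓ m`.
-/

lemma isPullback_of_existsUnique_lift {C : Type*} [Category C] {P X Y Z : C} {fst : P ⟶ X}
    {snd : P ⟶ Y} {f : X ⟶ Z} {g : Y ⟶ Z} (w : fst ≫ f = snd ≫ g)
    (h : ∀ ⦃W : C⦄ (a : W ⟶ X) (b : W ⟶ Y), a ≫ f = b ≫ g →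
      ∃! t : W ⟶ P, t ≫ fst = a ∧ t ≫ snd = b) :
    IsPullback fst snd f g :=
  IsPullback.of_isLimit (PullbackCone.IsLimit.mk w
    (fun s => (h s.fst s.snd s.condition).choose)
    (fun s => (h s.fst s.snd s.condition).choose_spec.1.1)
    (fun s => (h s.fst s.snd s.condition).choose_spec.1.2)
    (fun s t h₁ h₂ => (h s.fst s.snd s.condition).choose_spec.2 t ⟨h₁, h₂⟩))

section GlobalElements

variable {V} {B}
omit [SymmetricCategory V] [MonoidalClosed V]

lemma eHomEquiv_comp_eq_comp_eHomWhiskerLeft {X Y Z : B} (f : X ⟶ Y) (g : Y ⟶ Z) :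
    eHomEquiv V (f ≫ g) = eHomEquiv V f ≫ eHomWhiskerLeft V X g := by
  simp only [eHomEquiv_comp, eHomWhiskerLeft, MonoidalCategory.tensorHom_def]
  rw [← Category.assoc (eHomEquiv V f), rightUnitor_inv_naturality]
  simp [unitors_inv_equal]

lemma eHomEquiv_comp_eq_comp_eHomWhiskerRight {X Y Z : B} (f : X ⟶ Y) (g : Y ⟶ Z) :
    eHomEquiv V (f ≫ g) = eHomEquiv V g ≫ eHomWhiskerRight V f Z := by
  simp only [eHomEquiv_comp, eHomWhiskerRight, tensorHom_def']
  rw [← Category.assoc (eHomEquiv V g), leftUnitor_inv_naturality]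
  simp

lemma mono_of_vMono {X₁ X₂ : B} {m : X₁ ⟶ X₂} (hm : vMono V B m) : Mono m where
  right_cancellation {Y} f g h := by
    have := hm Y
    apply (eHomEquiv V).injective
    rw [← cancel_mono (eHomWhiskerLeft V Y m), ← eHomEquiv_comp_eq_comp_eHomWhiskerLeft,
      ← eHomEquiv_comp_eq_comp_eHomWhiskerLeft, h]

lemma epi_of_vEpi {A₁ A₂ : B} {e : A₁ ⟶ A₂} (he : vEpi V B e) : Epi e where
  left_cancellation {Y} f g h := by
    have := he Y
    apply (eHomEquiv V).injective
    rw [← cancel_mono (eHomWhiskerRight V e Y), ← eHomEquiv_comp_eq_comp_eHomWhiskerRight,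
      ← eHomEquiv_comp_eq_comp_eHomWhiskerRight, h]

lemma ordOrth_of_vOrth {A₁ A₂ X₁ X₂ : B} {e : A₁ ⟶ A₂} {m : X₁ ⟶ X₂}
    (h : VOrth V B e m) : OrdOrth B e m := by
  intro u w huw
  unfold VOrth at h
  have hcomm : eHomEquiv V w ≫ eHomWhiskerRight V e X₂ =
      eHomEquiv V u ≫ eHomWhiskerLeft V A₁ m := by
    rw [← eHomEquiv_comp_eq_comp_eHomWhiskerRight, ← eHomEquiv_comp_eq_comp_eHomWhiskerLeft, huw]
  refine ⟨(eHomEquiv V).symm (h.lift (eHomEquiv V w) (eHomEquiv V u) hcomm), ⟨?_, ?_⟩, ?_⟩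
  · apply (eHomEquiv V).injective
    rw [eHomEquiv_comp_eq_comp_eHomWhiskerRight, Equiv.apply_symm_apply, IsPullback.lift_snd]
  · apply (eHomEquiv V).injective
    rw [eHomEquiv_comp_eq_comp_eHomWhiskerLeft, Equiv.apply_symm_apply, IsPullback.lift_fst]
  · intro d ⟨hd₁, hd₂⟩
    apply (eHomEquiv V).injective
    apply h.hom_ext
    · rw [Equiv.apply_symm_apply, IsPullback.lift_fst, ← eHomEquiv_comp_eq_comp_eHomWhiskerLeft,
        hd₂]
    · rw [Equiv.apply_symm_apply, IsPullback.lift_snd, ← eHomEquiv_comp_eq_comp_eHomWhiskerRight,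
        hd₁]

end GlobalElements

section Tensors

variable {V} {B}
omit [SymmetricCategory V]

lemma bijective_curry_rightUnitor_comp (v W : V) :
    Function.Bijective fun z : v ⟶ W => MonoidalClosed.curry ((ρ_ v).hom ≫ z) :=
  ((ρ_ v).symm.homFromEquiv.trans ((ihom.adjunction v).homEquiv (𝟙_ V) W)).bijective

lemma eHomEquiv_comp_tensorComparison {v : V} {A T : B} (η : v ⟶ (A ⟶[V] T)) {X : B}
    (g : T ⟶ X) :
    eHomEquiv V g ≫ tensorComparison V B η X =
      MonoidalClosed.curry ((ρ_ v).hom ≫ η ≫ eHomWhiskerLeft V A g) := by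
  rw [tensorComparison, ← Category.assoc, ← MonoidalClosed.curry_natural_left,
    MonoidalClosed.curry_pre_app, eHomWhiskerLeft, rightUnitor_inv_naturality_assoc,
    Iso.hom_inv_id_assoc]

lemma IsTensorUnit.bijective {v : V} {A T : B} {η : v ⟶ (A ⟶[V] T)}
    (hη : IsTensorUnit V B v A T η) (X : B) :
    Function.Bijective fun g : T ⟶ X => η ≫ eHomWhiskerLeft V A g := by
  have := hη X
  refine ((bijective_curry_rightUnitor_comp v _).of_comp_iff' _).1 ?_
  have hfactor : (fun z => MonoidalClosed.curry ((ρ_ v).hom ≫ z)) ∘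
      (fun g : T ⟶ X => η ≫ eHomWhiskerLeft V A g) =
      (asIso (tensorComparison V B η X)).homToEquiv ∘ eHomEquiv V :=
    funext fun g => (eHomEquiv_comp_tensorComparison η g).symm
  rw [hfactor]
  exact (Equiv.bijective _).comp (Equiv.bijective _)

noncomputable def IsTensorUnit.homEquiv {v : V} {A T : B} {η : v ⟶ (A ⟶[V] T)}
    (hη : IsTensorUnit V B v A T η) (X : B) : (T ⟶ X) ≃ (v ⟶ (A ⟶[V] X)) :=
  Equiv.ofBijective _ (hη.bijective X)

@[simp]
lemma IsTensorUnit.homEquiv_apply {v : V} {A T : B} {η : v ⟶ (A ⟶[V] T)}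
    (hη : IsTensorUnit V B v A T η) {X : B} (g : T ⟶ X) :
    hη.homEquiv X g = η ≫ eHomWhiskerLeft V A g :=
  rfl

lemma IsTensorUnit.homEquiv_comp {v : V} {A T : B} {η : v ⟶ (A ⟶[V] T)}
    (hη : IsTensorUnit V B v A T η) {X Y : B} (g : T ⟶ X) (h : X ⟶ Y) :
    hη.homEquiv Y (g ≫ h) = hη.homEquiv X g ≫ eHomWhiskerLeft V A h := by
  simp

lemma vMono_of_mono (ht : Tensored V B) {X₁ X₂ : B} {m : X₁ ⟶ X₂} (hm : Mono m) :
    vMono V B m := fun A => ⟨fun {Z} z₁ z₂ h => by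
  obtain ⟨T, η, hη⟩ := ht Z A
  obtain ⟨g₁, rfl⟩ := (hη.homEquiv X₁).surjective z₁
  obtain ⟨g₂, rfl⟩ := (hη.homEquiv X₁).surjective z₂
  rw [← hη.homEquiv_comp, ← hη.homEquiv_comp, Equiv.apply_eq_iff_eq, cancel_mono] at h
  rw [h]⟩

/-- The morphism `v ⊗ e : v ⊗ A₁ ⟶ v ⊗ A₂` between the tensors exhibited by `η₁` and `η₂`. -/
noncomputable def IsTensorUnit.tensorMap {v : V} {A₁ A₂ T₁ T₂ : B} {η₁ : v ⟶ (A₁ ⟶[V] T₁)}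
    (hη₁ : IsTensorUnit V B v A₁ T₁ η₁) (η₂ : v ⟶ (A₂ ⟶[V] T₂)) (e : A₁ ⟶ A₂) : T₁ ⟶ T₂ :=
  (hη₁.homEquiv T₂).symm (η₂ ≫ eHomWhiskerRight V e T₂)

lemma IsTensorUnit.homEquiv_tensorMap_comp {v : V} {A₁ A₂ T₁ T₂ : B} {η₁ : v ⟶ (A₁ ⟶[V] T₁)}
    (hη₁ : IsTensorUnit V B v A₁ T₁ η₁) (η₂ : v ⟶ (A₂ ⟶[V] T₂)) (e : A₁ ⟶ A₂) {Y : B}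
    (q : T₂ ⟶ Y) :
    hη₁.homEquiv Y (hη₁.tensorMap η₂ e ≫ q) =
      η₂ ≫ eHomWhiskerLeft V A₂ q ≫ eHomWhiskerRight V e Y := by
  rw [hη₁.homEquiv_comp, tensorMap, Equiv.apply_symm_apply, Category.assoc,
    eHom_whisker_exchange]

lemma IsTensorUnit.epi_tensorMap {v : V} {A₁ A₂ T₁ T₂ : B} {η₁ : v ⟶ (A₁ ⟶[V] T₁)}
    {η₂ : v ⟶ (A₂ ⟶[V] T₂)} (hη₁ : IsTensorUnit V B v A₁ T₁ η₁)
    (hη₂ : IsTensorUnit V B v A₂ T₂ η₂) {e : A₁ ⟶ A₂} (he : vEpi V B e) :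
    Epi (hη₁.tensorMap η₂ e) where
  left_cancellation {Y} f g h := by
    have := he Y
    apply_fun hη₁.homEquiv Y at h
    rw [hη₁.homEquiv_tensorMap_comp, hη₁.homEquiv_tensorMap_comp, ← Category.assoc,
      ← Category.assoc, cancel_mono] at h
    exact (hη₂.homEquiv Y).injective h

/-- A cone with vertex `v` over the square of hom-objects transposes to a commutative square
from `v ⊗ e` to `m`, and diagonals of the two correspond. -/
lemma vOrth_of_ordOrth_tensorMap (ht : Tensored V B) {A₁ A₂ X₁ X₂ : B} {e : A₁ ⟶ A₂}
    {m : X₁ ⟶ X₂}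
    (h : ∀ {v : V} {T₁ T₂ : B} {η₁ : v ⟶ (A₁ ⟶[V] T₁)} {η₂ : v ⟶ (A₂ ⟶[V] T₂)}
      (hη₁ : IsTensorUnit V B v A₁ T₁ η₁), IsTensorUnit V B v A₂ T₂ η₂ →
        OrdOrth B (hη₁.tensorMap η₂ e) m) :
    VOrth V B e m := by
  refine isPullback_of_existsUnique_lift (eHom_whisker_exchange V e m) fun Z a b hab => ?_
  obtain ⟨T₁, η₁, hη₁⟩ := ht Z A₁
  obtain ⟨T₂, η₂, hη₂⟩ := ht Z A₂
  obtain ⟨u, rfl⟩ := (hη₁.homEquiv X₁).surjective b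
  obtain ⟨w, rfl⟩ := (hη₂.homEquiv X₂).surjective a
  have transpose : ∀ d : T₂ ⟶ X₁,
      (hη₂.homEquiv X₁ d ≫ eHomWhiskerLeft V A₂ m = hη₂.homEquiv X₂ w ∧
        hη₂.homEquiv X₁ d ≫ eHomWhiskerRight V e X₁ = hη₁.homEquiv X₁ u) ↔
      (hη₁.tensorMap η₂ e ≫ d = u ∧ d ≫ m = w) := by
    intro d
    rw [and_comm, ← hη₂.homEquiv_comp, (hη₂.homEquiv X₂).apply_eq_iff_eq, hη₂.homEquiv_apply,
      Category.assoc, ← hη₁.homEquiv_tensorMap_comp, (hη₁.homEquiv X₁).apply_eq_iff_eq]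
  have hsq : u ≫ m = hη₁.tensorMap η₂ e ≫ w := by
    apply (hη₁.homEquiv X₂).injective
    rw [hη₁.homEquiv_comp, ← hab, hη₁.homEquiv_tensorMap_comp, hη₂.homEquiv_apply,
      Category.assoc]
  obtain ⟨d, hd, hd_unique⟩ := h hη₁ hη₂ u w hsq
  refine ⟨hη₂.homEquiv X₁ d, (transpose d).2 hd, fun t ht => ?_⟩
  obtain ⟨d', rfl⟩ := (hη₂.homEquiv X₁).surjective t
  rw [hd_unique d' ((transpose d').1 ht)]

lemma vOrth_of_ordStrongMono (ht : Tensored V B) {X₁ X₂ : B} {m : X₁ ⟶ X₂}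
    (hm : ordStrongMono B m) {A₁ A₂ : B} {e : A₁ ⟶ A₂} (he : vEpi V B e) :
    VOrth V B e m :=
  vOrth_of_ordOrth_tensorMap ht fun hη₁ hη₂ => hm.2 _ (hη₁.epi_tensorMap hη₂ he)

end Tensors

section Cotensors

variable {V} {B}

lemma eHomEquiv_comp_cotensorComparison {v : V} {C X : B} (ε : v ⟶ (C ⟶[V] X)) {A : B}
    (g : A ⟶ C) :
    eHomEquiv V g ≫ cotensorComparison V B ε A =
      MonoidalClosed.curry ((ρ_ v).hom ≫ ε ≫ eHomWhiskerRight V g X) := by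
  rw [cotensorComparison, ← Category.assoc, ← MonoidalClosed.curry_natural_left,
    MonoidalClosed.curry_pre_app, eHomWhiskerRight,
    ← Category.assoc ((C ⟶[V] X) ◁ eHomEquiv V g), BraidedCategory.braiding_naturality_right,
    ← braiding_leftUnitor]
  simp

lemma IsCotensorCounit.bijective {v : V} {X C : B} {ε : v ⟶ (C ⟶[V] X)}
    (hε : IsCotensorCounit V B v X C ε) (A : B) :
    Function.Bijective fun g : A ⟶ C => ε ≫ eHomWhiskerRight V g X := by
  have := hε A
  refine ((bijective_curry_rightUnitor_comp v _).of_comp_iff' _).1 ?_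
  have hfactor : (fun z => MonoidalClosed.curry ((ρ_ v).hom ≫ z)) ∘
      (fun g : A ⟶ C => ε ≫ eHomWhiskerRight V g X) =
      (asIso (cotensorComparison V B ε A)).homToEquiv ∘ eHomEquiv V :=
    funext fun g => (eHomEquiv_comp_cotensorComparison ε g).symm
  rw [hfactor]
  exact (Equiv.bijective _).comp (Equiv.bijective _)

noncomputable def IsCotensorCounit.homEquiv {v : V} {X C : B} {ε : v ⟶ (C ⟶[V] X)}
    (hε : IsCotensorCounit V B v X C ε) (A : B) : (A ⟶ C) ≃ (v ⟶ (A ⟶[V] X)) :=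
  Equiv.ofBijective _ (hε.bijective A)

@[simp]
lemma IsCotensorCounit.homEquiv_apply {v : V} {X C : B} {ε : v ⟶ (C ⟶[V] X)}
    (hε : IsCotensorCounit V B v X C ε) {A : B} (g : A ⟶ C) :
    hε.homEquiv A g = ε ≫ eHomWhiskerRight V g X :=
  rfl

lemma IsCotensorCounit.homEquiv_comp {v : V} {X C : B} {ε : v ⟶ (C ⟶[V] X)}
    (hε : IsCotensorCounit V B v X C ε) {A A' : B} (f : A ⟶ A') (g : A' ⟶ C) :
    hε.homEquiv A (f ≫ g) = hε.homEquiv A' g ≫ eHomWhiskerRight V f X := by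
  simp

lemma vEpi_of_epi (hc : Cotensored V B) {A₁ A₂ : B} {e : A₁ ⟶ A₂} (he : Epi e) :
    vEpi V B e := fun X => ⟨fun {Z} z₁ z₂ h => by
  obtain ⟨C, ε, hε⟩ := hc Z X
  obtain ⟨g₁, rfl⟩ := (hε.homEquiv A₂).surjective z₁
  obtain ⟨g₂, rfl⟩ := (hε.homEquiv A₂).surjective z₂
  rw [← hε.homEquiv_comp, ← hε.homEquiv_comp, Equiv.apply_eq_iff_eq, cancel_epi] at h
  rw [h]⟩

end Cotensors

/-- In a tensored and cotensored `V`-category, the `V`-strong monomorphisms coincide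
with the ordinary strong monomorphisms and the `V`-epimorphisms coincide with the
ordinary epimorphisms. -/
theorem stmt9 (ht : Tensored V B) (hc : Cotensored V B) :
    vStrongMono V B = ordStrongMono B ∧ vEpi V B = ordEpi B := by
  refine ⟨?_, ?_⟩
  · ext X₁ X₂ m
    exact ⟨fun hm => ⟨mono_of_vMono hm.1,
        fun _ _ e he => ordOrth_of_vOrth (hm.2 e (vEpi_of_epi hc he))⟩,
      fun hm => ⟨vMono_of_mono ht hm.1, fun _ _ _ he => vOrth_of_ordStrongMono ht hm he⟩⟩
  · ext A₁ A₂ e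
    exact ⟨epi_of_vEpi, vEpi_of_epi hc⟩

end EnrichedFS
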